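/- Let G be a finite group, M a G-module, H ≤ G of finite index, and K a normal subgroup of G contained in H. Then the corestriction maps on the E₂-pages of the Hochschild–Serre spectral sequences for (G,K) and (H,K), namely Cores_{H/K}^{G/K} : H^p(H/K, H^q(K, Q/Z)) → H^p(G/K, H^q(K, Q/Z)), are compatible with the corestriction Cores_H^G : H^n(H, Q/Z) → H^n(G, Q/Z); in particular they preserve the induced filtrations: Cores_H^G(F^p H^n(H,Q/Z)) ⊆ F^p H^n(G,Q/Z). -/
import Mathlib


open scoped BigOperators Classical

/-- The group `ℚ/ℤ`. -/
abbrev QZ : Type := AddCircle (1 : ℚ)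

/-- The differential on inhomogeneous group cochains with trivial coefficients in `ℚ/ℤ`. -/
noncomputable def cochainD {G : Type*} [Group G] {n : ℕ} (f : (Fin n → G) → QZ) :
    (Fin (n + 1) → G) → QZ := fun g =>
  f (fun i => g i.succ) +
    (∑ i : Fin n, ((-1 : ℤ) ^ ((i : ℕ) + 1)) •
      f (fun j => if (j : ℕ) < (i : ℕ) then g (Fin.castSucc j)
        else if (j : ℕ) = (i : ℕ) then g (Fin.castSucc j) * g j.succ
        else g j.succ)) +
    ((-1 : ℤ) ^ (n + 1)) • f (fun i => g (Fin.castSucc i))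

/-- A cochain is a cocycle if its differential vanishes. -/
noncomputable def IsCocycle {G : Type*} [Group G] {n : ℕ} (f : (Fin n → G) → QZ) : Prop :=
  cochainD f = 0

/-- A cochain is a coboundary if it is the differential of a cochain of one degree lower
(in degree `0` this means that it vanishes). -/
noncomputable def IsCoboundary {G : Type*} [Group G] : {n : ℕ} → ((Fin n → G) → QZ) → Prop
  | 0, f => f = 0
  | (_ + 1), f => ∃ h, cochainD h = f

/-- Extension by zero of a cochain on a subgroup to a cochain on the ambient group. -/
noncomputable def restrictTo {G : Type*} [Group G] (H : Subgroup G) {n : ℕ}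
    (f : (Fin n → H) → QZ) : (Fin n → G) → QZ := fun g =>
  if h : ∀ i, g i ∈ H then f (fun i => ⟨g i, h i⟩) else 0

/-- The transfer (corestriction) of an inhomogeneous cochain on a subgroup `H` of `G`
along a section `σ` of the space of right cosets of `H` in `G`. -/
noncomputable def transfer {G : Type*} [Group G] (H : Subgroup G)
    (σ : Quotient (QuotientGroup.rightRel H) → G) {n : ℕ}
    (f : (Fin n → H) → QZ) : (Fin n → G) → QZ := fun g =>
  ∑ᶠ x : Quotient (QuotientGroup.rightRel H),
    restrictTo H f (fun i =>
      σ (Quotient.mk (QuotientGroup.rightRel H) (σ x * ((List.ofFn g).take i).prod))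
        * g i *
      (σ (Quotient.mk (QuotientGroup.rightRel H)
          (σ x * ((List.ofFn g).take ((i : ℕ) + 1)).prod)))⁻¹)

/-- `σ` is a section of the right coset space. -/
def IsSection {G : Type*} [Group G] (H : Subgroup G)
    (σ : Quotient (QuotientGroup.rightRel H) → G) : Prop :=
  ∀ x, Quotient.mk (QuotientGroup.rightRel H) (σ x) = x

/-- Additive characters with values in `ℚ/ℤ`. -/
def IsChar {G : Type*} [Group G] (χ : G → QZ) : Prop :=
  ∀ a b, χ (a * b) = χ a + χ b

/-- The explicit 3-cocycle representing the cup product `χ ∪ χ'` of two degree-one classes,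
written in terms of rational lifts `a` of `χ` and `b` of `χ'`. -/
noncomputable def cup3 {H : Type*} [Group H] (a b : H → ℚ) : (Fin 3 → H) → QZ := fun g =>
  (((a (g 0) + a (g 1) - a (g 0 * g 1)) * b (g 2) : ℚ) : QZ)

/-- The Hochschild–Serre filtration on cochains: `f` lies in filtration `p` with respect to a
normal subgroup `K` if it is invariant under translating its last `p` arguments by `K`. -/
def inFilt {G : Type*} [Group G] (K : Subgroup G) (p : ℕ) {n : ℕ}
    (f : (Fin n → G) → QZ) : Prop :=
  ∀ (g κ : Fin n → G), (∀ i, κ i ∈ K) → (∀ i : Fin n, (i : ℕ) < n - p → κ i = 1) →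
    f (fun i => g i * κ i) = f g

namespace Stmt6Aux

variable {G : Type*} [Group G]

def qk (H : Subgroup G) (a : G) : Quotient (QuotientGroup.rightRel H) :=
  Quotient.mk (QuotientGroup.rightRel H) a

lemma qk_eq_iff (H : Subgroup G) {a b : G} : qk H a = qk H b ↔ a * b⁻¹ ∈ H := by
  constructor
  · intro h
    have := Quotient.eq''.mp h
    rw [QuotientGroup.rightRel_apply] at this
    simpa using H.inv_mem this
  · intro h
    apply Quotient.eq''.mpr
    rw [QuotientGroup.rightRel_apply]
    simpa using H.inv_mem h

variable {H : Subgroup G} {σ : Quotient (QuotientGroup.rightRel H) → G}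

lemma qk_sec_mul (hσ : IsSection H σ) (y z : G) : qk H (σ (qk H y) * z) = qk H (y * z) := by
  rw [qk_eq_iff]
  have h1 : qk H (σ (qk H y)) = qk H y := hσ _
  have h2 := (qk_eq_iff H).mp h1
  have e : σ (qk H y) * z * (y * z)⁻¹ = σ (qk H y) * y⁻¹ := by group
  rw [e]
  exact h2

def pt {m : ℕ} (g : Fin m → G) (i : ℕ) : G := ((List.ofFn g).take i).prod

@[simp] lemma pt_zero {m : ℕ} (g : Fin m → G) : pt g 0 = 1 := rfl

lemma pt_succ {m : ℕ} (g : Fin m → G) (i : ℕ) (hi : i < m) :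
    pt g (i + 1) = pt g i * g ⟨i, hi⟩ := by
  unfold pt
  rw [List.prod_take_succ _ _ (by simpa using hi)]
  congr 1
  simp

/-- the coset representative used at position `i` -/
def sI (σ : Quotient (QuotientGroup.rightRel H) → G)
    (x : Quotient (QuotientGroup.rightRel H)) {m : ℕ} (g : Fin m → G) (i : ℕ) : G :=
  σ (qk H (σ x * pt g i))

/-- the twisted tuple -/
def Tt (σ : Quotient (QuotientGroup.rightRel H) → G)
    (x : Quotient (QuotientGroup.rightRel H)) {m : ℕ} (g : Fin m → G) : Fin m → G :=
  fun i => sI σ x g i * g i * (sI σ x g ((i : ℕ) + 1))⁻¹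

lemma qk_sI (hσ : IsSection H σ) (x : Quotient (QuotientGroup.rightRel H))
    {m : ℕ} (g : Fin m → G) (i : ℕ) : qk H (sI σ x g i) = qk H (σ x * pt g i) := hσ _

lemma Tt_mem (hσ : IsSection H σ) (x : Quotient (QuotientGroup.rightRel H))
    {m : ℕ} (g : Fin m → G) (i : Fin m) : Tt σ x g i ∈ H := by
  have h1 : qk H (sI σ x g i * g i) = qk H (sI σ x g ((i : ℕ) + 1)) := by
    rw [qk_sI hσ]
    unfold sI
    rw [qk_sec_mul hσ]
    congr 1
    rw [mul_assoc, ← pt_succ g i i.isLt]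
  have := (qk_eq_iff H).mp h1
  simpa [Tt, mul_assoc] using this

end Stmt6Aux

namespace Stmt6Aux

variable {G : Type*} [Group G] {H : Subgroup G} {σ : Quotient (QuotientGroup.rightRel H) → G}

/-- the `i`-th inner face map -/
def dface {α : Type*} [Mul α] {m : ℕ} (i : Fin m) (g : Fin (m + 1) → α) : Fin m → α :=
  fun j => if (j : ℕ) < (i : ℕ) then g (Fin.castSucc j)
    else if (j : ℕ) = (i : ℕ) then g (Fin.castSucc j) * g j.succ
    else g j.succ

lemma pt_tail {m : ℕ} (g : Fin (m + 1) → G) (j : ℕ) (hj : j ≤ m) :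
    g 0 * pt (fun i => g i.succ) j = pt g (j + 1) := by
  induction j with
  | zero => rw [pt_succ g 0 (Nat.succ_pos m)]; simp
  | succ j ih =>
    have hjm : j < m := hj
    rw [pt_succ (fun i => g i.succ) j hjm, ← mul_assoc, ih (le_of_lt hjm),
      pt_succ g (j + 1) (by omega)]
    rfl

lemma pt_init {m : ℕ} (g : Fin (m + 1) → G) (j : ℕ) (hj : j ≤ m) :
    pt (fun i => g (Fin.castSucc i)) j = pt g j := by
  induction j with
  | zero => rfl
  | succ j ih =>
    have hjm : j < m := hj
    rw [pt_succ (fun i => g (Fin.castSucc i)) j hjm, ih (le_of_lt hjm),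
      pt_succ g j (by omega)]
    rfl

lemma dface_lt {α : Type*} [Mul α] {m : ℕ} (i : Fin m) (g : Fin (m + 1) → α)
    (j : Fin m) (h : (j : ℕ) < (i : ℕ)) : dface i g j = g (Fin.castSucc j) := if_pos h

lemma dface_eq {α : Type*} [Mul α] {m : ℕ} (i : Fin m) (g : Fin (m + 1) → α)
    (j : Fin m) (h : (j : ℕ) = (i : ℕ)) :
    dface i g j = g (Fin.castSucc j) * g j.succ := by
  unfold dface; rw [if_neg (by omega), if_pos h]

lemma dface_gt {α : Type*} [Mul α] {m : ℕ} (i : Fin m) (g : Fin (m + 1) → α)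
    (j : Fin m) (h : (i : ℕ) < (j : ℕ)) : dface i g j = g j.succ := by
  unfold dface; rw [if_neg (by omega), if_neg (by omega)]

lemma pt_dface {m : ℕ} (g : Fin (m + 1) → G) (i : Fin m) (j : ℕ) (hj : j ≤ m) :
    pt (dface i g) j = if j ≤ (i : ℕ) then pt g j else pt g (j + 1) := by
  induction j with
  | zero => simp
  | succ j ih =>
    have hjm : j < m := hj
    rw [pt_succ (dface i g) j hjm, ih (le_of_lt hjm)]
    rcases lt_trichotomy j (i : ℕ) with h | h | h
    · rw [if_pos (le_of_lt h), if_pos (by omega), dface_lt i g ⟨j, hjm⟩ h]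
      exact (pt_succ g j (by omega)).symm
    · rw [if_pos (le_of_eq h), if_neg (by omega), dface_eq i g ⟨j, hjm⟩ h, ← mul_assoc]
      rw [show pt g j * g (Fin.castSucc ⟨j, hjm⟩) = pt g (j + 1) from
        (pt_succ g j (by omega)).symm]
      exact (pt_succ g (j + 1) (by omega)).symm
    · rw [if_neg (by omega), if_neg (by omega), dface_gt i g ⟨j, hjm⟩ h]
      exact (pt_succ g (j + 1) (by omega)).symm

lemma sI_dface (x : Quotient (QuotientGroup.rightRel H))
    {m : ℕ} (g : Fin (m + 1) → G) (i : Fin m) (k : ℕ) (hk : k ≤ m) :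
    sI σ x (dface i g) k = if k ≤ (i : ℕ) then sI σ x g k else sI σ x g (k + 1) := by
  unfold sI
  rw [pt_dface g i k hk]
  split <;> rfl

lemma sI_tail (hσ : IsSection H σ) (x : Quotient (QuotientGroup.rightRel H))
    {m : ℕ} (g : Fin (m + 1) → G) (j : ℕ) (hj : j ≤ m) :
    sI σ (qk H (σ x * g 0)) (fun i => g i.succ) j = sI σ x g (j + 1) := by
  unfold sI
  congr 1
  rw [qk_sec_mul hσ, mul_assoc, pt_tail g j hj]

lemma Tt_tail (hσ : IsSection H σ) (x : Quotient (QuotientGroup.rightRel H))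
    {m : ℕ} (g : Fin (m + 1) → G) :
    Tt σ (qk H (σ x * g 0)) (fun i => g i.succ) = fun i : Fin m => Tt σ x g i.succ := by
  funext i
  unfold Tt
  rw [sI_tail hσ x g i (by omega), sI_tail hσ x g (i + 1) (by omega)]
  rfl

lemma Tt_dface (x : Quotient (QuotientGroup.rightRel H))
    {m : ℕ} (i : Fin m) (g : Fin (m + 1) → G) :
    Tt σ x (dface i g) = dface i (Tt σ x g) := by
  funext j
  have key : Tt σ x (dface i g) j
      = (if (j : ℕ) ≤ (i : ℕ) then sI σ x g j else sI σ x g ((j : ℕ) + 1))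
        * dface i g j *
        (if (j : ℕ) + 1 ≤ (i : ℕ) then sI σ x g ((j : ℕ) + 1)
          else sI σ x g ((j : ℕ) + 2))⁻¹ := by
    show sI σ x (dface i g) j * dface i g j * (sI σ x (dface i g) ((j : ℕ) + 1))⁻¹ = _
    rw [sI_dface x g i j (by omega), sI_dface x g i ((j : ℕ) + 1) (by omega)]
  rcases lt_trichotomy (j : ℕ) (i : ℕ) with h | h | h
  · rw [key, if_pos (le_of_lt h), if_pos (by omega), dface_lt i g j h,
      dface_lt i (Tt σ x g) j h]
    rfl
  · rw [key, if_pos (le_of_eq h), if_neg (by omega), dface_eq i g j h,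
      dface_eq i (Tt σ x g) j h]
    show sI σ x g (j : ℕ) * (g (Fin.castSucc j) * g j.succ) * (sI σ x g ((j : ℕ) + 2))⁻¹
      = (sI σ x g ((Fin.castSucc j : Fin (m + 1)) : ℕ) * g (Fin.castSucc j)
          * (sI σ x g (((Fin.castSucc j : Fin (m + 1)) : ℕ) + 1))⁻¹)
        * (sI σ x g ((j.succ : Fin (m + 1)) : ℕ) * g j.succ
          * (sI σ x g (((j.succ : Fin (m + 1)) : ℕ) + 1))⁻¹)
    have h1 : ((Fin.castSucc j : Fin (m + 1)) : ℕ) = (j : ℕ) := rfl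
    have h2 : ((j.succ : Fin (m + 1)) : ℕ) = (j : ℕ) + 1 := rfl
    rw [h1, h2]
    group
  · rw [key, if_neg (by omega), if_neg (by omega), dface_gt i g j h,
      dface_gt i (Tt σ x g) j h]
    rfl

lemma Tt_init (x : Quotient (QuotientGroup.rightRel H))
    {m : ℕ} (g : Fin (m + 1) → G) :
    Tt σ x (fun i => g (Fin.castSucc i)) = fun i : Fin m => Tt σ x g (Fin.castSucc i) := by
  funext i
  unfold Tt
  unfold sI
  rw [pt_init g i (by omega), pt_init g ((i : ℕ) + 1) (by omega)]
  rfl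

end Stmt6Aux

namespace Stmt6Aux

variable {G : Type*} [Group G] {H : Subgroup G} {σ : Quotient (QuotientGroup.rightRel H) → G}

noncomputable def restrictTo' (H : Subgroup G) {n : ℕ}
    (f : (Fin n → H) → QZ) : (Fin n → G) → QZ := fun g =>
  if h : ∀ i, g i ∈ H then f (fun i => ⟨g i, h i⟩) else 0

/-- the twisted tuple, valued in `H` -/
noncomputable def Ts (hσ : IsSection H σ) (x : Quotient (QuotientGroup.rightRel H))
    {m : ℕ} (g : Fin m → G) : Fin m → H :=
  fun i => ⟨Tt σ x g i, Tt_mem hσ x g i⟩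

lemma restrictTo'_Tt (hσ : IsSection H σ) {m : ℕ} (f : (Fin m → H) → QZ)
    (x : Quotient (QuotientGroup.rightRel H)) (g : Fin m → G) :
    restrictTo' H f (Tt σ x g) = f (Ts hσ x g) := by
  unfold restrictTo'
  rw [dif_pos (fun i => Tt_mem hσ x g i)]
  rfl

end Stmt6Aux

namespace Stmt6Aux

variable {G : Type*} [Group G] {H : Subgroup G} {σ : Quotient (QuotientGroup.rightRel H) → G}

lemma restrictTo_Tt (hσ : IsSection H σ) {m : ℕ} (f : (Fin m → H) → QZ)
    (x : Quotient (QuotientGroup.rightRel H)) (g : Fin m → G) :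
    restrictTo H f (Tt σ x g) = f (Ts hσ x g) := by
  unfold restrictTo
  rw [dif_pos (fun i => Tt_mem hσ x g i)]
  rfl

lemma transfer_eq_sum [Fintype (Quotient (QuotientGroup.rightRel H))]
    (hσ : IsSection H σ) {m : ℕ} (f : (Fin m → H) → QZ) (g : Fin m → G) :
    transfer H σ f g = ∑ x, f (Ts hσ x g) := by
  have : transfer H σ f g = ∑ᶠ x, f (Ts hσ x g) :=
    finsum_congr fun x => restrictTo_Tt hσ f x g
  rw [this, finsum_eq_sum_of_fintype]

lemma Ts_dface (hσ : IsSection H σ) (x : Quotient (QuotientGroup.rightRel H))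
    {m : ℕ} (i : Fin m) (g : Fin (m + 1) → G) :
    Ts hσ x (dface i g) = dface i (Ts hσ x g) := by
  funext j
  apply Subtype.ext
  show Tt σ x (dface i g) j = ((dface i (Ts hσ x g) j : H) : G)
  rw [congrFun (Tt_dface x i g) j]
  rcases lt_trichotomy (j : ℕ) (i : ℕ) with h | h | h
  · rw [dface_lt i (Tt σ x g) j h, dface_lt i (Ts hσ x g) j h]; rfl
  · rw [dface_eq i (Tt σ x g) j h, dface_eq i (Ts hσ x g) j h]; rfl
  · rw [dface_gt i (Tt σ x g) j h, dface_gt i (Ts hσ x g) j h]; rfl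

lemma Ts_tail (hσ : IsSection H σ) (x : Quotient (QuotientGroup.rightRel H))
    {m : ℕ} (g : Fin (m + 1) → G) :
    Ts hσ (qk H (σ x * g 0)) (fun i => g i.succ) = fun i : Fin m => Ts hσ x g i.succ := by
  funext i
  apply Subtype.ext
  exact congrFun (Tt_tail hσ x g) i

lemma Ts_init (hσ : IsSection H σ) (x : Quotient (QuotientGroup.rightRel H))
    {m : ℕ} (g : Fin (m + 1) → G) :
    Ts hσ x (fun i => g (Fin.castSucc i)) = fun i : Fin m => Ts hσ x g (Fin.castSucc i) := by
  funext i
  apply Subtype.ext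
  exact congrFun (Tt_init x g) i

lemma phi_bijective (hσ : IsSection H σ) (a : G) :
    Function.Bijective (fun x : Quotient (QuotientGroup.rightRel H) => qk H (σ x * a)) := by
  apply Function.bijective_iff_has_inverse.mpr
  refine ⟨fun x => qk H (σ x * a⁻¹), fun x => ?_, fun x => ?_⟩
  · show qk H (σ (qk H (σ x * a)) * a⁻¹) = x
    rw [qk_sec_mul hσ, mul_inv_cancel_right]
    exact hσ x
  · show qk H (σ (qk H (σ x * a⁻¹)) * a) = x
    rw [qk_sec_mul hσ, inv_mul_cancel_right]
    exact hσ x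

/-- the transfer of a cocycle is a cocycle -/
lemma transfer_cocycle [Finite G] (hσ : IsSection H σ) {m : ℕ}
    (f : (Fin (m + 1) → H) → QZ) (hf : IsCocycle f) :
    IsCocycle (transfer H σ f) := by
  letI : Fintype (Quotient (QuotientGroup.rightRel H)) := Fintype.ofFinite _
  funext g
  show (transfer H σ f fun i => g i.succ) +
      (∑ i : Fin (m + 1), ((-1 : ℤ) ^ ((i : ℕ) + 1)) • transfer H σ f (dface i g)) +
      ((-1 : ℤ) ^ (m + 1 + 1)) • transfer H σ f (fun i => g (Fin.castSucc i)) = 0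
  have e0 : (transfer H σ f fun i => g i.succ)
      = ∑ x, f (fun i => Ts hσ x g i.succ) := by
    rw [transfer_eq_sum hσ]
    refine (Fintype.sum_bijective _ (phi_bijective hσ (g 0))
      (fun x => f (fun i => Ts hσ x g i.succ))
      (fun x => f (Ts hσ x (fun i => g i.succ))) (fun x => ?_)).symm
    show f (fun i => Ts hσ x g i.succ) = f (Ts hσ (qk H (σ x * g 0)) fun i => g i.succ)
    rw [show (Ts hσ (qk H (σ x * g 0)) (fun i => g i.succ)) = fun i => Ts hσ x g i.succ
      from Ts_tail hσ x g]
  have e1 : ∀ i : Fin (m + 1), transfer H σ f (dface i g)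
      = ∑ x, f (dface i (Ts hσ x g)) := by
    intro i
    rw [transfer_eq_sum hσ]
    exact Finset.sum_congr rfl fun x _ => by rw [Ts_dface hσ x i g]
  have e2 : transfer H σ f (fun i => g (Fin.castSucc i))
      = ∑ x, f (fun i => Ts hσ x g (Fin.castSucc i)) := by
    rw [transfer_eq_sum hσ]
    exact Finset.sum_congr rfl fun x _ => by rw [Ts_init hσ x g]
  rw [e0, e2, Finset.sum_congr rfl fun (i : Fin (m + 1)) _ => by rw [e1 i]]
  rw [Finset.smul_sum]
  simp_rw [Finset.smul_sum]
  rw [Finset.sum_comm, ← Finset.sum_add_distrib, ← Finset.sum_add_distrib]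
  apply Finset.sum_eq_zero
  intro x _
  show cochainD f (Ts hσ x g) = 0
  rw [hf]
  rfl

/-- the transfer preserves the filtration -/
lemma transfer_inFilt [Finite G] (hσ : IsSection H σ) {K : Subgroup G} (hKH : K ≤ H)
    [hN : K.Normal] {m pp : ℕ} (f : (Fin m → H) → QZ)
    (hfilt : inFilt (K.subgroupOf H) pp f) :
    inFilt K pp (transfer H σ f) := by
  letI : Fintype (Quotient (QuotientGroup.rightRel H)) := Fintype.ofFinite _
  intro g κ hκ hκ1
  rw [transfer_eq_sum hσ, transfer_eq_sum hσ]
  apply Finset.sum_congr rfl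
  intro x _
  have hc : ∀ j : ℕ, j ≤ m → (pt g j)⁻¹ * pt (fun i => g i * κ i) j ∈ K := by
    intro j hj
    induction j with
    | zero => simpa using K.one_mem
    | succ j ih =>
      have hjm : j < m := hj
      rw [pt_succ g j hjm, pt_succ (fun i => g i * κ i) j hjm]
      have key : (pt g j * g ⟨j, hjm⟩)⁻¹ *
          (pt (fun i => g i * κ i) j * (g ⟨j, hjm⟩ * κ ⟨j, hjm⟩))
          = ((g ⟨j, hjm⟩)⁻¹ * ((pt g j)⁻¹ * pt (fun i => g i * κ i) j) * g ⟨j, hjm⟩)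
            * κ ⟨j, hjm⟩ := by group
      rw [key]
      exact K.mul_mem (hN.conj_mem' _ (ih (le_of_lt hjm)) _) (hκ _)
  have hsI : ∀ j : ℕ, j ≤ m → sI σ x (fun i => g i * κ i) j = sI σ x g j := by
    intro j hj
    unfold sI
    congr 1
    rw [qk_eq_iff]
    have key : σ x * pt (fun i => g i * κ i) j * (σ x * pt g j)⁻¹
        = (σ x * pt g j) * ((pt g j)⁻¹ * pt (fun i => g i * κ i) j) * (σ x * pt g j)⁻¹ := by
      group
    rw [key]
    exact hKH (hN.conj_mem _ (hc j hj) _)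
  have hmem : ∀ i : Fin m, sI σ x g ((i : ℕ) + 1) * κ i * (sI σ x g ((i : ℕ) + 1))⁻¹ ∈ K :=
    fun i => hN.conj_mem _ (hκ i) _
  have hTt : ∀ i : Fin m, Tt σ x (fun i => g i * κ i) i
      = Tt σ x g i * (sI σ x g ((i : ℕ) + 1) * κ i * (sI σ x g ((i : ℕ) + 1))⁻¹) := by
    intro i
    unfold Tt
    rw [hsI i (by omega), hsI ((i : ℕ) + 1) (by omega)]
    group
  have hTs : Ts hσ x (fun i => g i * κ i)
      = fun i => Ts hσ x g i * ⟨_, hKH (hmem i)⟩ := by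
    funext i
    apply Subtype.ext
    exact hTt i
  rw [hTs]
  exact hfilt (Ts hσ x g) (fun i => ⟨_, hKH (hmem i)⟩)
    (fun i => Subgroup.mem_subgroupOf.mpr (hmem i))
    (fun i hi => by
      apply Subtype.ext
      show sI σ x g ((i : ℕ) + 1) * κ i * (sI σ x g ((i : ℕ) + 1))⁻¹ = 1
      rw [hκ1 i hi]
      group)

end Stmt6Aux

open Stmt6Aux in
/-- Let `G` be a finite group, `H ≤ G` of finite index and `K ◁ G` a normal subgroup
contained in `H`.  The corestriction `Cores_H^G` is compatible with the Hochschild–Serre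
spectral sequences of `(G,K)` and `(H,K)` (with coefficients `ℚ/ℤ`); in particular it
preserves the induced filtrations: `Cores_H^G(F^p H^n(H,ℚ/ℤ)) ⊆ F^p H^n(G,ℚ/ℤ)`.
At the level of inhomogeneous cochains, the filtration `F^p` consists of the classes
represented by cocycles that are invariant under translation of their last `p` arguments by
`K`; the statement says that the transfer of such a cocycle on `H` is, up to coboundary, a
cocycle of the same type on `G`. -/
theorem stmt6 (G : Type) [Group G] [Finite G] (H K : Subgroup G)
    (hKH : K ≤ H) [K.Normal]
    (pp n : ℕ)
    (f : (Fin (n + 1) → H) → QZ) (hf : IsCocycle f)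
    (hfilt : inFilt (K.subgroupOf H) pp f)
    (σ : Quotient (QuotientGroup.rightRel H) → G) (hσ : IsSection H σ) :
    ∃ f' : (Fin (n + 1) → G) → QZ,
      IsCocycle f' ∧ inFilt K pp f' ∧ IsCoboundary (transfer H σ f - f') := by
  refine ⟨transfer H σ f, transfer_cocycle hσ f hf, transfer_inFilt hσ hKH f hfilt, ?_⟩
  rw [sub_self]
  exact ⟨0, by funext g; show cochainD (fun _ => (0 : QZ)) g = 0; simp [cochainD]⟩
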